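/- arXiv:1210.5487 — 6 statements merged into one kernel-verified Lean document; each statement's English description precedes it below -/
import Mathlib

section
/- Fix λ > 0 and r ∈ (0, 1/3). There exist constants C > 0 and h₀ > 0 such that for every h ∈ (0, h₀) with N := 1/(λh) a positive integer and every s ∈ [0, h^{−r}], the number P_N(ξ(s)) is strictly positive and | log P_N(ξ(s)) + s²/2 − (s⁴/24 + λ²s⁴/8 − λ²s⁶/48) h² | ≤ C (s⁸h³ + s⁶h⁴). -/
/-!
Once `N ξ ≤ 1/2`, every factor of `P_N(ξ)` is positive and `log P_N(ξ)` is the sum of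
`log (1 - mξ) - log (1 + (m+1)ξ)`; expanding each logarithm to third order and summing gives the
cubic `-N²ξ + N²ξ²/2 - (N⁴+N²)ξ³/6` up to `O(N (Nξ)⁴)`. With `N = 1/(λh)` and `ξ = 2λ²h² u`, where
`u = sin²(sh/2)/h² = s²/4 - s⁴h²/48 + s⁶h⁴/1440 + O(s⁸h⁶)` by the Taylor expansion of `cos`, this
cubic is the claimed expansion. For `s ≤ h^{-r}` with `r < 1/2` one has `λ s² h ≤ 1` and `sh ≤ 1`
once `h` is small, which keeps every error term below a multiple of `s⁸h³ + s⁶h⁴`.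
-/

/-- The Crank–Nicolson Fourier symbol `P_N(ξ) = ∏_{m=0}^{N-1} (1 - mξ)/(1 + (m+1)ξ)`. -/
noncomputable def P (N : ℕ) (ξ : ℝ) : ℝ :=
  ∏ m ∈ Finset.range N, (1 - (m : ℝ) * ξ) / (1 + ((m : ℝ) + 1) * ξ)

/-- `ξ(s) = 2λ² sin²(sh/2)`. -/
noncomputable def xi (lam h s : ℝ) : ℝ := 2 * lam ^ 2 * Real.sin (s * h / 2) ^ 2

open Finset

lemma Real.abs_cos_sub_taylor_le {x : ℝ} (hx : |x| ≤ 1) :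
    |Real.cos x - (1 - x ^ 2 / 2 + x ^ 4 / 24 - x ^ 6 / 720)| ≤ x ^ 8 := by
  have hxI : ‖(x : ℂ) * Complex.I‖ = |x| := by simp
  have hbound := Complex.exp_bound (hxI.trans_le hx) (n := 8) (by norm_num)
  have hre : (Complex.exp (x * Complex.I)
      - ∑ m ∈ range 8, ((x : ℂ) * Complex.I) ^ m / m.factorial).re
      = Real.cos x - (1 - x ^ 2 / 2 + x ^ 4 / 24 - x ^ 6 / 720) := by
    simp [sum_range_succ, Nat.factorial, mul_pow, Complex.exp_ofReal_mul_I_re]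
    simp only [← Complex.ofReal_pow, Complex.ofReal_re, Complex.ofReal_im]
    ring
  rw [← hre, ← Even.pow_abs (by decide)]
  calc _ ≤ _ := Complex.abs_re_le_norm _
    _ ≤ _ := hbound
    _ ≤ |x| ^ 8 := by
      rw [hxI]
      exact mul_le_of_le_one_right (by positivity) (by norm_num [Nat.factorial])

lemma Real.abs_log_one_add_sub_taylor_le {x : ℝ} (hx : |x| ≤ 1 / 2) :
    |Real.log (1 + x) - (x - x ^ 2 / 2 + x ^ 3 / 3)| ≤ 2 * x ^ 4 := by
  have h := Real.abs_log_sub_add_sum_range_le (x := -x) (by rw [abs_neg]; linarith) 3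
  rw [abs_neg] at h
  calc _ = |∑ i ∈ range 3, (-x) ^ (i + 1) / (i + 1) + Real.log (1 - -x)| := by
        simp [sum_range_succ]; ring_nf
    _ ≤ |x| ^ 4 / (1 - |x|) := h
    _ ≤ 2 * x ^ 4 := by
      rw [div_le_iff₀ (by linarith), ← (by decide : Even 4).pow_abs x]
      nlinarith [mul_nonneg (pow_nonneg (abs_nonneg x) 4) (by linarith : 0 ≤ 1 - 2 * |x|)]

lemma Real.abs_sin_sq_half_sub_taylor_le {x : ℝ} (hx : |x| ≤ 1) :
    |Real.sin (x / 2) ^ 2 - (x ^ 2 / 4 - x ^ 4 / 48 + x ^ 6 / 1440)| ≤ x ^ 8 / 2 := by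
  have h := Real.abs_cos_sub_taylor_le hx
  rw [Real.sin_sq_eq_half_sub, mul_div_cancel₀ x two_ne_zero]
  calc _ = |Real.cos x - (1 - x ^ 2 / 2 + x ^ 4 / 24 - x ^ 6 / 720)| / 2 := by
        rw [← abs_neg, ← abs_two, ← abs_div, abs_two]; ring_nf
    _ ≤ x ^ 8 / 2 := by linarith

lemma P_factor_pos {a ξ : ℝ} (ha : 0 ≤ a) (hξ : 0 ≤ ξ) (h : a * ξ < 1) :
    0 < (1 - a * ξ) / (1 + (a + 1) * ξ) :=
  div_pos (by linarith) (by positivity)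

lemma abs_log_P_factor_sub_le {a ξ : ℝ} (ha : 0 ≤ a) (hξ : 0 ≤ ξ) (h : (a + 1) * ξ ≤ 1 / 2) :
    |Real.log ((1 - a * ξ) / (1 + (a + 1) * ξ))
        - (-(2 * a + 1) * ξ + (2 * a + 1) * ξ ^ 2 / 2 - (a ^ 3 + (a + 1) ^ 3) * ξ ^ 3 / 3)|
      ≤ 4 * ((a + 1) * ξ) ^ 4 := by
  have haξ : a * ξ ≤ (a + 1) * ξ := by nlinarith
  have hnum := Real.abs_log_one_add_sub_taylor_le (x := -(a * ξ))
    (by rw [abs_neg, abs_of_nonneg (by positivity)]; linarith)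
  have hden := Real.abs_log_one_add_sub_taylor_le (x := (a + 1) * ξ)
    (by rw [abs_of_nonneg (by positivity)]; linarith)
  have hpow : (-(a * ξ)) ^ 4 ≤ ((a + 1) * ξ) ^ 4 := by
    rw [Even.neg_pow (by decide)]; exact pow_le_pow_left₀ (by positivity) haξ 4
  rw [← sub_eq_add_neg] at hnum
  rw [Real.log_div (by nlinarith) (by positivity)]
  calc _ = |(Real.log (1 - a * ξ) - (-(a * ξ) - (-(a * ξ)) ^ 2 / 2 + (-(a * ξ)) ^ 3 / 3))
        - (Real.log (1 + (a + 1) * ξ)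
          - ((a + 1) * ξ - ((a + 1) * ξ) ^ 2 / 2 + ((a + 1) * ξ) ^ 3 / 3))| := by ring_nf
    _ ≤ 2 * (-(a * ξ)) ^ 4 + 2 * ((a + 1) * ξ) ^ 4 := (abs_sub _ _).trans (add_le_add hnum hden)
    _ ≤ 4 * ((a + 1) * ξ) ^ 4 := by linarith

/-- The third-order Taylor polynomial of `log P_N` at `ξ = 0`. -/
noncomputable def logPCubic (N ξ : ℝ) : ℝ := -N ^ 2 * ξ + N ^ 2 * ξ ^ 2 / 2 - (N ^ 4 + N ^ 2) * ξ ^ 3 / 6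

lemma sum_range_log_P_factor_taylor (N : ℕ) (ξ : ℝ) :
    ∑ m ∈ range N, (-(2 * (m : ℝ) + 1) * ξ + (2 * (m : ℝ) + 1) * ξ ^ 2 / 2
        - ((m : ℝ) ^ 3 + ((m : ℝ) + 1) ^ 3) * ξ ^ 3 / 3) = logPCubic N ξ := by
  induction N with
  | zero => simp [logPCubic]
  | succ n ih =>
    rw [sum_range_succ, ih, logPCubic, logPCubic]
    push_cast
    ring

lemma P_pos {N : ℕ} {ξ : ℝ} (hξ : 0 ≤ ξ) (h : N * ξ < 1) : 0 < P N ξ :=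
  prod_pos fun m hm ↦ P_factor_pos m.cast_nonneg hξ <|
    lt_of_le_of_lt (mul_le_mul_of_nonneg_right (mod_cast (mem_range.1 hm).le) hξ) h

lemma abs_log_P_sub_logPCubic_le {N : ℕ} {ξ : ℝ} (hξ : 0 ≤ ξ) (h : N * ξ ≤ 1 / 2) :
    |Real.log (P N ξ) - logPCubic N ξ| ≤ N * (4 * (N * ξ) ^ 4) := by
  have hfactor : ∀ m ∈ range N, ((m : ℝ) + 1) * ξ ≤ N * ξ := fun m hm ↦
    mul_le_mul_of_nonneg_right (mod_cast mem_range.1 hm) hξ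
  rw [P, Real.log_prod fun m hm ↦ (P_factor_pos m.cast_nonneg hξ (by nlinarith [hfactor m hm])).ne',
    ← sum_range_log_P_factor_taylor, ← sum_sub_distrib]
  calc _ ≤ _ := abs_sum_le_sum_abs _ _
    _ ≤ ∑ _ ∈ range N, 4 * (N * ξ) ^ 4 := sum_le_sum fun m hm ↦
        (abs_log_P_factor_sub_le m.cast_nonneg hξ ((hfactor m hm).trans h)).trans <| by
          gcongr; exact mod_cast mem_range.1 hm
    _ = _ := by rw [sum_const, card_range, nsmul_eq_mul]

lemma logPCubic_eq {lam h : ℝ} (hlam : lam ≠ 0) (hh : h ≠ 0) (u : ℝ) :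
    logPCubic (1 / (lam * h)) (2 * lam ^ 2 * h ^ 2 * u)
      = -2 * u + 2 * lam ^ 2 * h ^ 2 * u ^ 2 - 4 / 3 * lam ^ 2 * h ^ 2 * u ^ 3
        - 4 / 3 * lam ^ 4 * h ^ 4 * u ^ 3 := by
  rw [logPCubic]
  field_simp
  ring

lemma abs_logPCubic_sub_expansion_le {lam h s u : ℝ} (hlam : lam ≠ 0) (hh : h ≠ 0)
    (hsh : (s * h) ^ 2 ≤ 1) (hu : 0 ≤ u) (hus : u ≤ s ^ 2 / 4)
    (happrox : |u - (s ^ 2 / 4 - s ^ 4 * h ^ 2 / 48 + s ^ 6 * h ^ 4 / 1440)| ≤ s ^ 8 * h ^ 6 / 2) :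
    |logPCubic (1 / (lam * h)) (2 * lam ^ 2 * h ^ 2 * u)
        + s ^ 2 / 2 - (s ^ 4 / 24 + lam ^ 2 * s ^ 4 / 8 - lam ^ 2 * s ^ 6 / 48) * h ^ 2|
      ≤ s ^ 8 * h ^ 6 + (1 / 720 + lam ^ 2 + lam ^ 4 / 48) * s ^ 6 * h ^ 4
        + lam ^ 2 / 4 * s ^ 8 * h ^ 4 := by
  have hlin : |u - s ^ 2 / 4| ≤ s ^ 4 * h ^ 2 := by
    have hsh3 : ((s * h) ^ 2) ^ 3 ≤ (s * h) ^ 2 := pow_le_of_le_one (by positivity) hsh (by norm_num)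
    have hsh2 : ((s * h) ^ 2) ^ 2 ≤ (s * h) ^ 2 := pow_le_of_le_one (by positivity) hsh (by norm_num)
    rw [abs_le] at happrox ⊢
    constructor <;> nlinarith [pow_two_nonneg (s ^ 2), mul_le_mul_of_nonneg_left hsh3 (sq_nonneg s)]
  have hmax : max |u| |s ^ 2 / 4| = s ^ 2 / 4 := by
    rw [abs_of_nonneg hu, abs_of_nonneg (by positivity), max_eq_right hus]
  have hsq : |u ^ 2 - (s ^ 2 / 4) ^ 2| ≤ s ^ 4 * h ^ 2 * 2 * (s ^ 2 / 4) := by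
    refine (abs_pow_sub_pow_le u _ 2).trans ?_
    rw [hmax]; norm_num; gcongr
  have hcube : |u ^ 3 - (s ^ 2 / 4) ^ 3| ≤ s ^ 4 * h ^ 2 * 3 * (s ^ 2 / 4) ^ 2 := by
    refine (abs_pow_sub_pow_le u _ 3).trans ?_
    rw [hmax]; norm_num; gcongr
  have hquad : |2 * lam ^ 2 * h ^ 2 * (u ^ 2 - (s ^ 2 / 4) ^ 2)|
      ≤ 2 * lam ^ 2 * h ^ 2 * (s ^ 4 * h ^ 2 * 2 * (s ^ 2 / 4)) := by
    rw [abs_mul, abs_of_nonneg (by positivity)]; gcongr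
  have hcub : |4 / 3 * lam ^ 2 * h ^ 2 * (u ^ 3 - (s ^ 2 / 4) ^ 3)|
      ≤ 4 / 3 * lam ^ 2 * h ^ 2 * (s ^ 4 * h ^ 2 * 3 * (s ^ 2 / 4) ^ 2) := by
    rw [abs_mul, abs_of_nonneg (by positivity)]; gcongr
  have hlast : 4 / 3 * lam ^ 4 * h ^ 4 * u ^ 3 ≤ 4 / 3 * lam ^ 4 * h ^ 4 * (s ^ 2 / 4) ^ 3 := by
    gcongr
  have hlast0 : 0 ≤ 4 / 3 * lam ^ 4 * h ^ 4 * u ^ 3 := by positivity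
  rw [logPCubic_eq hlam hh, show (-2 * u + 2 * lam ^ 2 * h ^ 2 * u ^ 2 - 4 / 3 * lam ^ 2 * h ^ 2 * u ^ 3
        - 4 / 3 * lam ^ 4 * h ^ 4 * u ^ 3)
        + s ^ 2 / 2 - (s ^ 4 / 24 + lam ^ 2 * s ^ 4 / 8 - lam ^ 2 * s ^ 6 / 48) * h ^ 2
      = -2 * (u - (s ^ 2 / 4 - s ^ 4 * h ^ 2 / 48 + s ^ 6 * h ^ 4 / 1440)) - s ^ 6 * h ^ 4 / 720
        + 2 * lam ^ 2 * h ^ 2 * (u ^ 2 - (s ^ 2 / 4) ^ 2)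
        - 4 / 3 * lam ^ 2 * h ^ 2 * (u ^ 3 - (s ^ 2 / 4) ^ 3)
        - 4 / 3 * lam ^ 4 * h ^ 4 * u ^ 3 by ring]
  rw [abs_le] at happrox hquad hcub ⊢
  have : 0 ≤ s ^ 6 * h ^ 4 := by positivity
  constructor <;> linarith

lemma sin_sq_half_mul_div_sq_le {h : ℝ} (hh : h ≠ 0) (s : ℝ) :
    Real.sin (s * h / 2) ^ 2 / h ^ 2 ≤ s ^ 2 / 4 := by
  rw [div_le_iff₀ (by positivity)]
  nlinarith [Real.sin_sq_le_sq (x := s * h / 2)]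

lemma abs_sin_sq_half_mul_div_sq_sub_le {h s : ℝ} (hh : h ≠ 0) (hsh : |s * h| ≤ 1) :
    |Real.sin (s * h / 2) ^ 2 / h ^ 2 - (s ^ 2 / 4 - s ^ 4 * h ^ 2 / 48 + s ^ 6 * h ^ 4 / 1440)|
      ≤ s ^ 8 * h ^ 6 / 2 := by
  have := Real.abs_sin_sq_half_sub_taylor_le hsh
  rw [show Real.sin (s * h / 2) ^ 2 / h ^ 2 - (s ^ 2 / 4 - s ^ 4 * h ^ 2 / 48 + s ^ 6 * h ^ 4 / 1440)
      = (Real.sin (s * h / 2) ^ 2 - ((s * h) ^ 2 / 4 - (s * h) ^ 4 / 48 + (s * h) ^ 6 / 1440)) / h ^ 2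
      by field_simp,
    abs_div, abs_of_pos (by positivity : (0 : ℝ) < h ^ 2), div_le_iff₀ (by positivity)]
  linarith

lemma log_P_xi_expansion {lam h s : ℝ} {N : ℕ} (hlam : 0 < lam) (hh : 0 < h) (hh1 : h ≤ 1)
    (hsh : |s * h| ≤ 1) (hsmall : lam * (s ^ 2 * h) ≤ 1) (hN : (N : ℝ) = 1 / (lam * h)) :
    0 < P N (xi lam h s) ∧
      |Real.log (P N (xi lam h s)) + s ^ 2 / 2
          - (s ^ 4 / 24 + lam ^ 2 * s ^ 4 / 8 - lam ^ 2 * s ^ 6 / 48) * h ^ 2|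
        ≤ (1 + lam ^ 2 + lam ^ 3 + lam ^ 4) * (s ^ 8 * h ^ 3 + s ^ 6 * h ^ 4) := by
  set u := Real.sin (s * h / 2) ^ 2 / h ^ 2 with hu
  have hxi : xi lam h s = 2 * lam ^ 2 * h ^ 2 * u := by rw [xi, hu]; field_simp
  have hu0 : 0 ≤ u := by positivity
  have hus : u ≤ s ^ 2 / 4 := sin_sq_half_mul_div_sq_le hh.ne' s
  have happrox := abs_sin_sq_half_mul_div_sq_sub_le hh.ne' hsh
  have hNxi : N * xi lam h s ≤ lam * (s ^ 2 * h) / 2 := by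
    rw [hN, hxi, show 1 / (lam * h) * (2 * lam ^ 2 * h ^ 2 * u) = 2 * lam * h * u by
      field_simp]
    nlinarith [mul_pos hlam hh]
  have hxi0 : 0 ≤ xi lam h s := by rw [hxi]; positivity
  have hlog := abs_log_P_sub_logPCubic_le hxi0 (hNxi.trans (by linarith))
  have herr : (N : ℝ) * (4 * (N * xi lam h s) ^ 4) ≤ lam ^ 3 / 4 * s ^ 8 * h ^ 3 := by
    calc _ ≤ (N : ℝ) * (4 * (lam * (s ^ 2 * h) / 2) ^ 4) := by
          gcongr
      _ = _ := by rw [hN]; field_simp; ring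
  have hcubic := abs_logPCubic_sub_expansion_le hlam.ne' hh.ne'
    ((sq_le_one_iff_abs_le_one _).2 hsh) hu0 hus happrox
  rw [← hN, ← hxi] at hcubic
  refine ⟨P_pos hxi0 (by linarith), ?_⟩
  have hh63 : h ^ 6 ≤ h ^ 3 := pow_le_pow_of_le_one hh.le hh1 (by norm_num)
  have hh43 : h ^ 4 ≤ h ^ 3 := pow_le_pow_of_le_one hh.le hh1 (by norm_num)
  calc _ = |(Real.log (P N (xi lam h s)) - logPCubic N (xi lam h s)) + (logPCubic N (xi lam h s)
          + s ^ 2 / 2 - (s ^ 4 / 24 + lam ^ 2 * s ^ 4 / 8 - lam ^ 2 * s ^ 6 / 48) * h ^ 2)| := by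
        ring_nf
    _ ≤ _ := (abs_add_le _ _).trans (add_le_add (hlog.trans herr) hcubic)
    _ ≤ _ := by
      have hA : s ^ 8 * h ^ 4 ≤ s ^ 8 * h ^ 3 := by gcongr
      have hA' : s ^ 8 * h ^ 6 ≤ s ^ 8 * h ^ 3 := by gcongr
      have hlamA : lam ^ 2 * (s ^ 8 * h ^ 4) ≤ lam ^ 2 * (s ^ 8 * h ^ 3) := by gcongr
      have : 0 ≤ s ^ 6 * h ^ 4 := by positivity
      have : 0 ≤ lam ^ 2 * (s ^ 8 * h ^ 3) := by positivity
      have : 0 ≤ lam ^ 3 * (s ^ 8 * h ^ 3) := by positivity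
      have : 0 ≤ lam ^ 4 * (s ^ 8 * h ^ 3) := by positivity
      have : 0 ≤ lam ^ 3 * (s ^ 6 * h ^ 4) := by positivity
      have : 0 ≤ lam ^ 4 * (s ^ 6 * h ^ 4) := by positivity
      linarith

lemma exists_pos_forall_rpow_le {a ε : ℝ} (ha : 0 < a) (hε : 0 < ε) :
    ∃ δ > 0, ∀ h : ℝ, 0 < h → h < δ → h ^ a ≤ ε := by
  refine ⟨ε ^ (1 / a), Real.rpow_pos_of_pos hε _, fun h hh hδ ↦ ?_⟩
  calc h ^ a ≤ (ε ^ (1 / a)) ^ a := Real.rpow_le_rpow hh.le hδ.le ha.le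
    _ = ε := by rw [← Real.rpow_mul hε.le, one_div_mul_cancel ha.ne', Real.rpow_one]

lemma sq_mul_le_rpow {h r s : ℝ} (hh : 0 < h) (hs : 0 ≤ s) (hsr : s ≤ h ^ (-r)) :
    s ^ 2 * h ≤ h ^ (1 - 2 * r) := by
  calc s ^ 2 * h ≤ (h ^ (-r)) ^ 2 * h := by gcongr
    _ = h ^ (1 - 2 * r) := by
      rw [show 1 - 2 * r = -r + -r + 1 by ring, Real.rpow_add hh, Real.rpow_add hh, Real.rpow_one,
        sq]

theorem stmt1_general (lam r : ℝ) (hlam : 0 < lam) (hr3 : r < 1 / 3) :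
    ∃ C > (0 : ℝ), ∃ h₀ > (0 : ℝ), ∀ h : ℝ, 0 < h → h < h₀ → ∀ N : ℕ, 0 < N →
      (N : ℝ) = 1 / (lam * h) → ∀ s : ℝ, 0 ≤ s → s ≤ h ^ (-r) →
      0 < P N (xi lam h s) ∧
      |Real.log (P N (xi lam h s)) + s ^ 2 / 2
          - (s ^ 4 / 24 + lam ^ 2 * s ^ 4 / 8 - lam ^ 2 * s ^ 6 / 48) * h ^ 2|
        ≤ C * (s ^ 8 * h ^ 3 + s ^ 6 * h ^ 4) := by
  obtain ⟨δ, hδ, hδsmall⟩ :=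
    exists_pos_forall_rpow_le (a := 1 - 2 * r) (ε := 1 / (1 + lam)) (by linarith) (by positivity)
  refine ⟨1 + lam ^ 2 + lam ^ 3 + lam ^ 4, by positivity, min δ 1, lt_min hδ one_pos, ?_⟩
  intro h hh hhδ N _ hN s hs hsr
  have hh1 : h ≤ 1 := (hhδ.trans_le (min_le_right _ _)).le
  have hs2h : s ^ 2 * h ≤ 1 / (1 + lam) :=
    (sq_mul_le_rpow hh hs hsr).trans (hδsmall h hh (hhδ.trans_le (min_le_left _ _)))
  have hlam1 : lam * (1 / (1 + lam)) ≤ 1 := by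
    rw [mul_one_div, div_le_one (by positivity)]; linarith
  refine log_P_xi_expansion hlam hh hh1 ?_ ?_ hN
  · rw [← sq_le_one_iff_abs_le_one, mul_pow]
    have : 1 / (1 + lam) ≤ 1 := by rw [div_le_one (by positivity)]; linarith
    nlinarith
  · exact (mul_le_mul_of_nonneg_left hs2h hlam.le).trans hlam1

/-- low wave number (regime I) expansion of `log P_N(ξ(s))`. -/
theorem stmt1 (lam r : ℝ) (hlam : 0 < lam) (hr : 0 < r) (hr3 : r < 1 / 3) :
    ∃ C > (0 : ℝ), ∃ h₀ > (0 : ℝ), ∀ h : ℝ, 0 < h → h < h₀ → ∀ N : ℕ, 0 < N →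
      (N : ℝ) = 1 / (lam * h) → ∀ s : ℝ, 0 ≤ s → s ≤ h ^ (-r) →
      0 < P N (xi lam h s) ∧
      |Real.log (P N (xi lam h s)) + s ^ 2 / 2
          - (s ^ 4 / 24 + lam ^ 2 * s ^ 4 / 8 - lam ^ 2 * s ^ 6 / 48) * h ^ 2|
        ≤ C * (s ^ 8 * h ^ 3 + s ^ 6 * h ^ 4) :=
  stmt1_general lam r hlam hr3
end

section
/- Fix λ > 0, r ∈ (0, 1/3) and q > 0. As h → 0⁺ along values of h for which N := 1/(λh) is a positive integer (and h is small enough that 1/(2λ²N) ≤ 1), one has h^{−q} · sup { | P_N(ξ(s)) − e^{−s²/2} | : h^{−r} ≤ s ≤ s_N } → 0, where s_N = (2/h) arcsin(1/√(2λ²N)). -/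
/-!
In regime II one has `0 ≤ ξ ≤ 1/N`, so every factor of `P_N(ξ)` lies in `[0, 1 - mξ] ⊆ [0, e^{-mξ}]`
and `0 ≤ P_N(ξ) ≤ e^{-N(N-1)ξ/2}`. Jordan's inequality `sin x ≥ 2x/π` gives `N²ξ(s) ≥ 2s²/π²`, so
both `P_N(ξ(s))` and `e^{-s²/2}` lie in `[0, e^{-s²/(2π²)}]`. For `s ≥ h^{-r}` this is at most
`e^{-h^{-2r}/(2π²)}`, which beats every power `h^{-q}` as `h → 0⁺`.
-/

open Real Finset Filter Topology

lemma sum_range_natCast_mul_two (N : ℕ) : (∑ m ∈ range N, (m : ℝ)) * 2 = N * (N - 1) := by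
  induction N with
  | zero => simp
  | succ n ih => rw [sum_range_succ, add_mul, ih]; push_cast; ring

section CrankNicolsonSymbol

variable {N : ℕ} {ξ : ℝ}

lemma P_factor_nonneg {m : ℕ} (hξ : 0 ≤ ξ) (hm : (m : ℝ) * ξ ≤ 1) :
    0 ≤ (1 - (m : ℝ) * ξ) / (1 + ((m : ℝ) + 1) * ξ) :=
  div_nonneg (by linarith) (by positivity)

lemma P_factor_le_exp {m : ℕ} (hξ : 0 ≤ ξ) (hm : (m : ℝ) * ξ ≤ 1) :
    (1 - (m : ℝ) * ξ) / (1 + ((m : ℝ) + 1) * ξ) ≤ exp (-((m : ℝ) * ξ)) :=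
  calc (1 - (m : ℝ) * ξ) / (1 + ((m : ℝ) + 1) * ξ) ≤ 1 - (m : ℝ) * ξ :=
        div_le_self (by linarith) (by nlinarith)
    _ ≤ exp (-((m : ℝ) * ξ)) := by linarith [add_one_le_exp (-((m : ℝ) * ξ))]

lemma natCast_mul_le_one_of_mem_range {m : ℕ} (hm : m ∈ range N) (hξ : 0 ≤ ξ)
    (hNξ : ((N : ℝ) - 1) * ξ ≤ 1) : (m : ℝ) * ξ ≤ 1 := by
  have : (m : ℝ) + 1 ≤ N := by exact_mod_cast mem_range.mp hm
  nlinarith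

lemma P_nonneg (hξ : 0 ≤ ξ) (hNξ : ((N : ℝ) - 1) * ξ ≤ 1) : 0 ≤ P N ξ :=
  prod_nonneg fun _ hm => P_factor_nonneg hξ (natCast_mul_le_one_of_mem_range hm hξ hNξ)

lemma P_le_exp (hξ : 0 ≤ ξ) (hNξ : ((N : ℝ) - 1) * ξ ≤ 1) :
    P N ξ ≤ exp (-(N * (N - 1) / 2 * ξ)) :=
  calc P N ξ ≤ ∏ m ∈ range N, exp (-((m : ℝ) * ξ)) :=
        prod_le_prod (fun _ hm => P_factor_nonneg hξ (natCast_mul_le_one_of_mem_range hm hξ hNξ))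
          fun _ hm => P_factor_le_exp hξ (natCast_mul_le_one_of_mem_range hm hξ hNξ)
    _ = exp (-(N * (N - 1) / 2 * ξ)) := by
        rw [← exp_sum, sum_neg_distrib, ← sum_mul, ← sum_range_natCast_mul_two]; ring_nf

end CrankNicolsonSymbol

section FourierVariable

variable {lam h s : ℝ}

lemma xi_nonneg : 0 ≤ xi lam h s := by unfold xi; positivity

lemma two_mul_sq_le_xi (hs : 0 ≤ s * h) (hsπ : s * h ≤ π) :
    2 * (lam * s * h / π) ^ 2 ≤ xi lam h s := by
  have hsin : s * h / π ≤ sin (s * h / 2) := by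
    calc s * h / π = 2 / π * (s * h / 2) := by ring
      _ ≤ sin (s * h / 2) := mul_le_sin (by positivity) (by linarith)
  calc 2 * (lam * s * h / π) ^ 2 = 2 * lam ^ 2 * (s * h / π) ^ 2 := by ring
    _ ≤ xi lam h s := by unfold xi; gcongr

lemma xi_le_of_le_arcsin {y : ℝ} (hy₀ : 0 ≤ y) (hy₁ : y ≤ 1) (hs : 0 ≤ s * h)
    (hsy : s * h / 2 ≤ arcsin y) : xi lam h s ≤ 2 * lam ^ 2 * y ^ 2 := by
  have hx : s * h / 2 ∈ Set.Icc (-(π / 2)) (π / 2) :=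
    ⟨by linarith [pi_pos], hsy.trans (arcsin_le_pi_div_two y)⟩
  have hsin : sin (s * h / 2) ≤ y := (le_arcsin_iff_sin_le hx ⟨by linarith, hy₁⟩).mp hsy
  have hsin₀ : 0 ≤ sin (s * h / 2) := sin_nonneg_of_nonneg_of_le_pi (by linarith) (by linarith [hx.2, pi_pos])
  unfold xi; gcongr

end FourierVariable

section RegimeII

variable {lam h s : ℝ} {N : ℕ}

lemma xi_le_inv_of_le_sN (hlam : lam ≠ 0) (hh : 0 < h) (hA : 1 / (2 * lam ^ 2 * N) ≤ 1)
    (hs : 0 ≤ s) (hsN : s ≤ (2 / h) * arcsin (1 / √(2 * lam ^ 2 * N))) :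
    xi lam h s ≤ 1 / N := by
  have hy : 1 / √(2 * lam ^ 2 * N) = √(1 / (2 * lam ^ 2 * N)) := by
    rw [one_div, one_div, sqrt_inv]
  rw [hy] at hsN
  have hsy : s * h / 2 ≤ arcsin √(1 / (2 * lam ^ 2 * N)) := by
    rw [div_mul_eq_mul_div, le_div_iff₀ hh] at hsN; linarith
  calc xi lam h s ≤ 2 * lam ^ 2 * √(1 / (2 * lam ^ 2 * N)) ^ 2 :=
        xi_le_of_le_arcsin (sqrt_nonneg _) (sqrt_le_one.mpr hA) (by positivity) hsy
    _ = 1 / N := by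
        rw [sq_sqrt (by positivity), one_div, one_div, mul_inv, mul_inv_cancel_left₀ (by positivity)]

lemma abs_P_xi_sub_exp_le (hh : 0 < h) (hN2 : 2 ≤ (N : ℝ)) (hN : lam * h * N = 1)
    (hA : 1 / (2 * lam ^ 2 * N) ≤ 1) (hs : 0 ≤ s)
    (hsN : s ≤ (2 / h) * arcsin (1 / √(2 * lam ^ 2 * N))) :
    |P N (xi lam h s) - exp (-s ^ 2 / 2)| ≤ exp (-s ^ 2 / (2 * π ^ 2)) := by
  have hlam : lam ≠ 0 := by rintro rfl; simp at hN
  have hξ₀ : 0 ≤ xi lam h s := xi_nonneg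
  have hNξ : ((N : ℝ) - 1) * xi lam h s ≤ 1 := by
    have := xi_le_inv_of_le_sN hlam hh hA hs hsN
    rw [le_div_iff₀ (by positivity)] at this
    nlinarith
  have hshπ : s * h ≤ π := by
    have := hsN.trans (mul_le_mul_of_nonneg_left (arcsin_le_pi_div_two _) (by positivity))
    rw [div_mul_eq_mul_div, le_div_iff₀ hh] at this; linarith
  have hdecay : s ^ 2 / (2 * π ^ 2) ≤ N * (N - 1) / 2 * xi lam h s :=
    calc s ^ 2 / (2 * π ^ 2) = N ^ 2 / 4 * (2 * (lam * s * h / π) ^ 2) := by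
          rw [show (N : ℝ) ^ 2 / 4 * (2 * (lam * s * h / π) ^ 2)
            = (lam * h * N) ^ 2 * s ^ 2 / (2 * π ^ 2) by ring, hN]; ring
      _ ≤ N * (N - 1) / 2 * (2 * (lam * s * h / π) ^ 2) :=
          mul_le_mul_of_nonneg_right (by nlinarith) (by positivity)
      _ ≤ N * (N - 1) / 2 * xi lam h s :=
          mul_le_mul_of_nonneg_left (two_mul_sq_le_xi (by positivity) hshπ) (by nlinarith)
  refine abs_sub_le_of_nonneg_of_le (P_nonneg hξ₀ hNξ) ?_ (exp_pos _).le ?_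
  · exact (P_le_exp hξ₀ hNξ).trans (exp_le_exp.2 (by rw [neg_div]; linarith))
  · refine exp_le_exp.2 ?_
    rw [neg_div, neg_div, neg_le_neg_iff]
    exact div_le_div_of_nonneg_left (sq_nonneg s) two_pos (by nlinarith [pi_gt_three])

end RegimeII

lemma tendsto_rpow_neg_mul_exp_neg_rpow_neg_div (q : ℝ) {c b : ℝ} (hc : 0 < c) (hb : 0 < b) :
    Tendsto (fun h : ℝ => h ^ (-q) * exp (-h ^ (-c) / b)) (𝓝[>] 0) (𝓝 0) := by
  have hatTop : Tendsto (fun t : ℝ => t ^ q * exp (-t ^ c / b)) atTop (𝓝 0) := by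
    refine ((tendsto_rpow_mul_exp_neg_mul_atTop_nhds_zero (q / c) b⁻¹ (inv_pos.2 hb)).comp
      (tendsto_rpow_atTop hc)).congr' ?_
    filter_upwards [eventually_gt_atTop 0] with t ht
    rw [Function.comp_apply, ← rpow_mul ht.le, mul_div_cancel₀ q hc.ne', neg_div, div_eq_inv_mul,
      neg_mul]
  refine (hatTop.comp tendsto_inv_nhdsGT_zero).congr' ?_
  filter_upwards [self_mem_nhdsWithin] with h hh
  rw [Function.comp_apply, rpow_neg (le_of_lt hh), rpow_neg (le_of_lt hh), inv_rpow (le_of_lt hh),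
    inv_rpow (le_of_lt hh)]

theorem stmt4_general (lam r q : ℝ) (hlam : 0 < lam) (hr : 0 < r) :
    ∀ ε > (0 : ℝ), ∃ h₀ > (0 : ℝ), ∀ h : ℝ, 0 < h → h < h₀ → ∀ N : ℕ, 0 < N →
      (N : ℝ) = 1 / (lam * h) → 1 / (2 * lam ^ 2 * N) ≤ 1 →
      ∀ s : ℝ, h ^ (-r) ≤ s →
        s ≤ (2 / h) * Real.arcsin (1 / Real.sqrt (2 * lam ^ 2 * N)) →
        h ^ (-q) * |P N (xi lam h s) - Real.exp (-s ^ 2 / 2)| < ε := by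
  intro ε hε
  obtain ⟨δ, hδ, hδε⟩ := (nhdsGT_basis 0).eventually_iff.mp <|
    (tendsto_rpow_neg_mul_exp_neg_rpow_neg_div q (by positivity : 0 < 2 * r)
      (by positivity : 0 < 2 * π ^ 2)).eventually_lt_const hε
  refine ⟨min δ (1 / (2 * lam)), by positivity, fun h hh hhδ N _ hNh hA s hsr hsN => ?_⟩
  have hN : lam * h * N = 1 := by rw [hNh]; field_simp
  have hN2 : 2 ≤ (N : ℝ) := by
    have : h * (2 * lam) < 1 := (lt_div_iff₀ (by positivity)).mp (hhδ.trans_le (min_le_right _ _))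
    nlinarith
  have hsq : h ^ (-(2 * r)) ≤ s ^ 2 := by
    rw [show -(2 * r) = -r * (2 : ℕ) by push_cast; ring, rpow_mul_natCast hh.le]
    exact pow_le_pow_left₀ (rpow_pos_of_pos hh _).le hsr 2
  calc h ^ (-q) * |P N (xi lam h s) - exp (-s ^ 2 / 2)|
      ≤ h ^ (-q) * exp (-h ^ (-(2 * r)) / (2 * π ^ 2)) := by
        gcongr
        refine (abs_P_xi_sub_exp_le hh hN2 hN hA ((rpow_pos_of_pos hh _).le.trans hsr) hsN).trans ?_
        gcongr
    _ < ε := hδε ⟨hh, hhδ.trans_le (min_le_left _ _)⟩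

/-- in the intermediate wave number regime (regime II),
`h^{-q} · sup_{h^{-r} ≤ s ≤ s_N} |P_N(ξ(s)) - e^{-s²/2}| → 0` as `h → 0⁺` along
values of `h` with `N = 1/(λh)` a positive integer and `1/(2λ²N) ≤ 1`,
where `s_N = (2/h) arcsin(1/√(2λ²N))`. -/
theorem stmt4 (lam r q : ℝ) (hlam : 0 < lam) (hr : 0 < r) (hr3 : r < 1 / 3)
    (hq : 0 < q) :
    ∀ ε > (0 : ℝ), ∃ h₀ > (0 : ℝ), ∀ h : ℝ, 0 < h → h < h₀ → ∀ N : ℕ, 0 < N →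
      (N : ℝ) = 1 / (lam * h) → 1 / (2 * lam ^ 2 * N) ≤ 1 →
      ∀ s : ℝ, h ^ (-r) ≤ s →
        s ≤ (2 / h) * Real.arcsin (1 / Real.sqrt (2 * lam ^ 2 * N)) →
        h ^ (-q) * |P N (xi lam h s) - Real.exp (-s ^ 2 / 2)| < ε :=
  stmt4_general lam r q hlam hr
end

section
/- Let N and m be integers with 1 ≤ m ≤ N − 1, and let ξ ∈ [1/(m+1), 1/m]. Then | ∏_{ν=0}^{N−1} (1 − νξ)/(1 + (ν+1)ξ) | ≤ ((m+1)!)² (N−m−1)! / ( (2m+2) (N+m)! ). -/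
/-!
For `ξ ∈ [1/(m+1), 1/m]` each factor `(1 - νξ)/(1 + (ν+1)ξ)` is bounded in absolute value
by its value at an endpoint of the interval: for `ν ≤ m` it is nonnegative and decreasing in
`ξ`, so it is at most its value `(m+1-ν)/(m+ν+2)` at `ξ = 1/(m+1)`; for `ν > m` it is
nonpositive and its absolute value increases with `ξ`, so it is at most `(ν-m)/(ν+m+1)`, the
value at `ξ = 1/m`. Both endpoint products telescope into factorials, and their product is
`W_{N,m}`.
-/

open Finset

noncomputable def cnFactor (ξ ν : ℝ) : ℝ := (1 - ν * ξ) / (1 + (ν + 1) * ξ)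

section EndpointBounds

variable {ξ ν m : ℝ}

lemma abs_cnFactor_le_of_le (hν : 0 ≤ ν) (hνm : ν ≤ m) (hup : m * ξ ≤ 1)
    (hlow : 1 ≤ (m + 1) * ξ) :
    |cnFactor ξ ν| ≤ (m + 1 - ν) / (m + ν + 2) := by
  have hξ : 0 ≤ ξ := by nlinarith
  have hden : 0 < 1 + (ν + 1) * ξ := by nlinarith
  rw [cnFactor, abs_of_nonneg (div_nonneg (by nlinarith) hden.le),
    div_le_div_iff₀ hden (by linarith)]
  -- the gap is `(2ν + 1)((m + 1)ξ - 1)`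
  linear_combination mul_le_mul_of_nonneg_left hlow (by linarith : 0 ≤ 2 * ν + 1)

lemma abs_cnFactor_le_of_lt (hm : 0 ≤ m) (hνm : m + 1 ≤ ν) (hup : m * ξ ≤ 1)
    (hlow : 1 ≤ (m + 1) * ξ) :
    |cnFactor ξ ν| ≤ (ν - m) / (ν + m + 1) := by
  have hξ : 0 ≤ ξ := by nlinarith
  have hden : 0 < 1 + (ν + 1) * ξ := by nlinarith
  rw [cnFactor, abs_div, abs_of_nonpos (by nlinarith), abs_of_pos hden,
    div_le_div_iff₀ hden (by linarith)]
  -- the gap is `(2ν + 1)(1 - mξ)`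
  linear_combination mul_le_mul_of_nonneg_left hup (by linarith : 0 ≤ 2 * ν + 1)

end EndpointBounds

lemma prod_range_sub_div_add (m : ℕ) :
    ∏ ν ∈ range (m + 1), ((m : ℝ) + 1 - ν) / ((m : ℝ) + ν + 2)
      = ((m + 1).factorial : ℝ) ^ 2 / (2 * m + 2).factorial := by
  have hnum : ∏ ν ∈ range (m + 1), ((m : ℝ) + 1 - ν) = (m + 1).factorial := by
    rw [← Nat.descFactorial_self, Nat.descFactorial_eq_prod_range, Nat.cast_prod]
    refine prod_congr rfl fun ν hν => ?_
    rw [Nat.cast_sub (Nat.le_of_lt (mem_range.1 hν))]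
    push_cast
    ring
  have hden : ((m + 1).factorial : ℝ) * ∏ ν ∈ range (m + 1), ((m : ℝ) + ν + 2)
      = (2 * m + 2).factorial := by
    rw [show 2 * m + 2 = m + 1 + (m + 1) by ring,
      ← Nat.factorial_mul_ascFactorial (m + 1) (m + 1), Nat.ascFactorial_eq_prod_range]
    push_cast
    congr 1
    exact prod_congr rfl fun ν _ => by ring
  rw [prod_div_distrib, hnum, ← hden]
  field_simp

lemma prod_Ico_sub_div_add {m N : ℕ} (hmN : m + 1 ≤ N) :
    ∏ ν ∈ Ico (m + 1) N, ((ν : ℝ) - m) / ((ν : ℝ) + m + 1)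
      = ((N - m - 1).factorial : ℝ) * (2 * m + 1).factorial / (N + m).factorial := by
  have hnum : ∏ k ∈ range (N - (m + 1)), (((m + 1 + k : ℕ) : ℝ) - m)
      = (N - m - 1).factorial := by
    rw [Nat.sub_sub, ← prod_range_add_one_eq_factorial, Nat.cast_prod]
    exact prod_congr rfl fun k _ => by push_cast; ring
  have hden : ((2 * m + 1).factorial : ℝ)
      * ∏ k ∈ range (N - (m + 1)), (((m + 1 + k : ℕ) : ℝ) + m + 1) = (N + m).factorial := by
    rw [show N + m = 2 * m + 1 + (N - (m + 1)) by omega,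
      ← Nat.factorial_mul_ascFactorial (2 * m + 1), Nat.ascFactorial_eq_prod_range]
    push_cast
    congr 1
    exact prod_congr rfl fun k _ => by ring
  rw [prod_Ico_eq_prod_range, prod_div_distrib, hnum, ← hden]
  field_simp

theorem stmt5_general (N m : ℕ) (hmN : m + 1 ≤ N) (ξ : ℝ)
    (hξ : ξ ∈ Set.Icc (1 / ((m : ℝ) + 1)) (1 / (m : ℝ))) :
    |∏ ν ∈ Finset.range N, (1 - (ν : ℝ) * ξ) / (1 + ((ν : ℝ) + 1) * ξ)|
      ≤ ((m + 1).factorial : ℝ) ^ 2 * ((N - m - 1).factorial : ℝ)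
          / ((2 * (m : ℝ) + 2) * ((N + m).factorial : ℝ)) := by
  obtain ⟨hξlow, hξup⟩ := hξ
  have hlow : 1 ≤ ((m : ℝ) + 1) * ξ := (div_le_iff₀' (by positivity)).1 hξlow
  have hup : (m : ℝ) * ξ ≤ 1 :=
    mul_comm ξ m ▸ mul_le_of_le_div₀ zero_le_one m.cast_nonneg hξup
  have hsmall : ∏ ν ∈ range (m + 1), |cnFactor ξ ν|
      ≤ ((m + 1).factorial : ℝ) ^ 2 / (2 * m + 2).factorial :=
    prod_range_sub_div_add m ▸ prod_le_prod (fun _ _ => abs_nonneg _) fun ν hν =>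
      abs_cnFactor_le_of_le ν.cast_nonneg
        (by exact_mod_cast Nat.lt_succ_iff.1 (mem_range.1 hν)) hup hlow
  have hlarge : ∏ ν ∈ Ico (m + 1) N, |cnFactor ξ ν|
      ≤ ((N - m - 1).factorial : ℝ) * (2 * m + 1).factorial / (N + m).factorial :=
    prod_Ico_sub_div_add hmN ▸ prod_le_prod (fun _ _ => abs_nonneg _) fun ν hν =>
      abs_cnFactor_le_of_lt m.cast_nonneg (by exact_mod_cast (mem_Ico.1 hν).1) hup hlow
  calc |∏ ν ∈ range N, cnFactor ξ ν|
      = (∏ ν ∈ range (m + 1), |cnFactor ξ ν|)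
          * ∏ ν ∈ Ico (m + 1) N, |cnFactor ξ ν| := by
        rw [← prod_range_mul_prod_Ico _ hmN, abs_mul, abs_prod, abs_prod]
    _ ≤ ((m + 1).factorial : ℝ) ^ 2 / (2 * m + 2).factorial
          * (((N - m - 1).factorial : ℝ) * (2 * m + 1).factorial / (N + m).factorial) := by
        gcongr
    _ = _ := by
        rw [Nat.factorial_succ (2 * m + 1)]
        push_cast
        field_simp
        ring

/-- the bound `W_{N,m}` on the Crank–Nicolson Fourier symbol in
wave number regime III, valid for `ξ ∈ [1/(m+1), 1/m]`. -/
theorem stmt5 (N m : ℕ) (hm : 1 ≤ m) (hmN : m + 1 ≤ N) (ξ : ℝ)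
    (hξ : ξ ∈ Set.Icc (1 / ((m : ℝ) + 1)) (1 / (m : ℝ))) :
    |∏ ν ∈ Finset.range N, (1 - (ν : ℝ) * ξ) / (1 + ((ν : ℝ) + 1) * ξ)|
      ≤ ((m + 1).factorial : ℝ) ^ 2 * ((N - m - 1).factorial : ℝ)
          / ((2 * (m : ℝ) + 2) * ((N + m).factorial : ℝ)) :=
  stmt5_general N m hmN ξ hξ
end

section
/- Let m* ≥ 1 be an integer and ξ > 0 with η := 1/(ξ(m* + 1/2)) < 1. Then the iterated series ∑_{j=1}^∞ (2/((2j+1) ξ^{2j+1})) ∑_{k=m*+1}^∞ k^{−(2j+1)} converges, and its value is strictly less than (m* + 1/2) η³ / (3(1 − η²)). -/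
/-!
Each inner tail is compared with the cubic one, `k^{-(2j+3)} ≤ (m+1)^{-2j} k^{-3}` for `k ≥ m+1`,
and the cubic tail is bounded by telescoping the midpoint inequality
`1/x³ ≤ (1/(x-1/2)² - 1/(x+1/2)²)/2`, giving `∑_{k>m} k^{-3} ≤ 1/(2(m+1/2)²)`.
With `M = m + 1/2` and `η = 1/(ξM)` the `j`-th term is then at most `M η^{2j+3}/3`,
strictly so for `j ≥ 1` because `M < m + 1`, and these bounds sum to `M η³/(3(1-η²))`.
-/

open Finset

lemma one_div_pow_three_le_sub_one_div_sq {x : ℝ} (hx : 1 / 2 < x) :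
    1 / x ^ 3 ≤ (1 / (x - 1 / 2) ^ 2 - 1 / (x + 1 / 2) ^ 2) / 2 := by
  have hb : 0 < x - 1 / 2 := by linarith
  have hc : 0 < x + 1 / 2 := by linarith
  rw [div_sub_div _ _ (by positivity) (by positivity), div_div,
    div_le_div_iff₀ (by positivity) (by positivity)]
  have hbc : (x - 1 / 2) * (x + 1 / 2) ≤ x ^ 2 := by nlinarith
  have h0 : 0 ≤ (x - 1 / 2) * (x + 1 / 2) := by positivity
  nlinarith [mul_le_mul hbc hbc h0 (sq_nonneg x)]

lemma tsum_one_div_add_pow_three_le {a : ℝ} (ha : 1 / 2 < a) :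
    ∑' k : ℕ, 1 / ((k : ℝ) + a) ^ 3 ≤ 1 / (a - 1 / 2) ^ 2 / 2 := by
  set G : ℕ → ℝ := fun k => 1 / ((k : ℝ) + a - 1 / 2) ^ 2 / 2
  have hstep (k : ℕ) : 1 / ((k : ℝ) + a) ^ 3 ≤ G k - G (k + 1) := by
    have h := one_div_pow_three_le_sub_one_div_sq (x := k + a)
      (by linarith [k.cast_nonneg (α := ℝ)])
    rw [show (k : ℝ) + a + 1 / 2 = ((k + 1 : ℕ) : ℝ) + a - 1 / 2 by push_cast; ring] at h
    simpa only [G, sub_div] using h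
  refine Real.tsum_le_of_sum_range_le (fun k => by positivity) fun N => ?_
  calc ∑ k ∈ range N, 1 / ((k : ℝ) + a) ^ 3
      ≤ ∑ k ∈ range N, (G k - G (k + 1)) := sum_le_sum fun k _ => hstep k
    _ = G 0 - G N := sum_range_sub' G N
    _ ≤ G 0 := sub_le_self _ (by positivity)
    _ = 1 / (a - 1 / 2) ^ 2 / 2 := by simp [G]

lemma summable_one_div_nat_add_pow (m : ℕ) {p : ℕ} (hp : 1 < p) :
    Summable (fun k : ℕ => 1 / (((k + m + 1 : ℕ) : ℝ)) ^ p) :=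
  (summable_nat_add_iff (f := fun n : ℕ => 1 / (n : ℝ) ^ p) (m + 1)).2
    (Real.summable_one_div_nat_pow.2 hp)

lemma tsum_one_div_nat_add_pow_le (m n : ℕ) :
    ∑' k : ℕ, 1 / (((k + m + 1 : ℕ) : ℝ)) ^ (n + 3)
      ≤ 1 / (2 * ((m : ℝ) + 1) ^ n * ((m : ℝ) + 1 / 2) ^ 2) := by
  have hterm (k : ℕ) : 1 / (((k + m + 1 : ℕ) : ℝ)) ^ (n + 3)
      ≤ 1 / (((k + m + 1 : ℕ) : ℝ)) ^ 3 / ((m : ℝ) + 1) ^ n := by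
    have hx : (m : ℝ) + 1 ≤ ((k + m + 1 : ℕ) : ℝ) := by
      push_cast
      linarith [k.cast_nonneg (α := ℝ)]
    rw [div_div, add_comm n 3, pow_add]
    gcongr
  have hcubic : ∑' k : ℕ, 1 / (((k + m + 1 : ℕ) : ℝ)) ^ 3
      = ∑' k : ℕ, 1 / ((k : ℝ) + (m + 1)) ^ 3 := by
    simp only [Nat.cast_add, Nat.cast_one, add_assoc]
  calc ∑' k : ℕ, 1 / (((k + m + 1 : ℕ) : ℝ)) ^ (n + 3)
      ≤ ∑' k : ℕ, 1 / (((k + m + 1 : ℕ) : ℝ)) ^ 3 / ((m : ℝ) + 1) ^ n :=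
        (summable_one_div_nat_add_pow m (by omega)).tsum_le_tsum hterm
          ((summable_one_div_nat_add_pow m (by omega)).div_const _)
    _ = (∑' k : ℕ, 1 / ((k : ℝ) + (m + 1)) ^ 3) / ((m : ℝ) + 1) ^ n := by
        rw [tsum_div_const, hcubic]
    _ ≤ 1 / ((m : ℝ) + 1 - 1 / 2) ^ 2 / 2 / ((m : ℝ) + 1) ^ n := by
        gcongr
        exact tsum_one_div_add_pow_three_le (by linarith [m.cast_nonneg (α := ℝ)])
    _ = 1 / (2 * ((m : ℝ) + 1) ^ n * ((m : ℝ) + 1 / 2) ^ 2) := by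
        rw [show (m : ℝ) + 1 - 1 / 2 = m + 1 / 2 by ring, div_div, div_div]
        ring

lemma three_mul_pow_le_mul_pow (m j : ℕ) :
    3 * ((m : ℝ) + 1 / 2) ^ (2 * j) ≤ (2 * (j : ℝ) + 3) * ((m : ℝ) + 1) ^ (2 * j) := by
  gcongr
  · linarith [j.cast_nonneg (α := ℝ)]
  · norm_num

lemma three_mul_pow_lt_mul_pow (m : ℕ) {j : ℕ} (hj : j ≠ 0) :
    3 * ((m : ℝ) + 1 / 2) ^ (2 * j) < (2 * (j : ℝ) + 3) * ((m : ℝ) + 1) ^ (2 * j) := by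
  have hpow : ((m : ℝ) + 1 / 2) ^ (2 * j) < ((m : ℝ) + 1) ^ (2 * j) :=
    pow_lt_pow_left₀ (by linarith) (by positivity) (by omega)
  calc 3 * ((m : ℝ) + 1 / 2) ^ (2 * j) < 3 * ((m : ℝ) + 1) ^ (2 * j) := by gcongr
    _ ≤ (2 * (j : ℝ) + 3) * ((m : ℝ) + 1) ^ (2 * j) := by
        gcongr
        linarith [j.cast_nonneg (α := ℝ)]

lemma coeff_mul_tsum_le (m j : ℕ) {ξ : ℝ} (hξ : 0 < ξ) :
    2 / ((2 * (j : ℝ) + 3) * ξ ^ (2 * j + 3)) *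
        ∑' k : ℕ, 1 / (((k + m + 1 : ℕ) : ℝ)) ^ (2 * j + 3)
      ≤ 1 / ((2 * (j : ℝ) + 3) * ((m : ℝ) + 1) ^ (2 * j) *
          (ξ ^ (2 * j + 3) * ((m : ℝ) + 1 / 2) ^ 2)) := by
  calc _ ≤ 2 / ((2 * (j : ℝ) + 3) * ξ ^ (2 * j + 3)) *
        (1 / (2 * ((m : ℝ) + 1) ^ (2 * j) * ((m : ℝ) + 1 / 2) ^ 2)) := by
        gcongr
        exact tsum_one_div_nat_add_pow_le m (2 * j)
    _ = _ := by field_simp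

lemma div_three_mul_one_div_mul_pow (m j : ℕ) (ξ : ℝ) :
    ((m : ℝ) + 1 / 2) / 3 * (1 / (ξ * ((m : ℝ) + 1 / 2))) ^ (2 * j + 3)
      = 1 / (3 * ((m : ℝ) + 1 / 2) ^ (2 * j) * (ξ ^ (2 * j + 3) * ((m : ℝ) + 1 / 2) ^ 2)) := by
  have : (m : ℝ) + 1 / 2 ≠ 0 := by positivity
  rw [div_pow, one_pow, mul_pow, pow_add, pow_add]
  field_simp

lemma hasSum_pow_two_mul_add_three {η : ℝ} (h : η ^ 2 < 1) :
    HasSum (fun j : ℕ => η ^ (2 * j + 3)) (η ^ 3 / (1 - η ^ 2)) := by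
  have hpow : (fun j : ℕ => η ^ (2 * j + 3)) = fun j => η ^ 3 * (η ^ 2) ^ j := by
    funext j
    ring
  rw [hpow, div_eq_mul_inv]
  exact (hasSum_geometric_of_lt_one (sq_nonneg η) h).mul_left (η ^ 3)

lemma coeff_mul_tsum_le_geometric (m : ℕ) {ξ : ℝ} (hξ : 0 < ξ) (j : ℕ) :
    2 / ((2 * (j : ℝ) + 3) * ξ ^ (2 * j + 3)) *
        ∑' k : ℕ, 1 / (((k + m + 1 : ℕ) : ℝ)) ^ (2 * j + 3)
      ≤ ((m : ℝ) + 1 / 2) / 3 * (1 / (ξ * ((m : ℝ) + 1 / 2))) ^ (2 * j + 3) := by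
  rw [div_three_mul_one_div_mul_pow]
  refine (coeff_mul_tsum_le m j hξ).trans (one_div_le_one_div_of_le (by positivity) ?_)
  exact mul_le_mul_of_nonneg_right (three_mul_pow_le_mul_pow m j) (by positivity)

lemma coeff_mul_tsum_lt_geometric (m : ℕ) {ξ : ℝ} (hξ : 0 < ξ) {j : ℕ} (hj : j ≠ 0) :
    2 / ((2 * (j : ℝ) + 3) * ξ ^ (2 * j + 3)) *
        ∑' k : ℕ, 1 / (((k + m + 1 : ℕ) : ℝ)) ^ (2 * j + 3)
      < ((m : ℝ) + 1 / 2) / 3 * (1 / (ξ * ((m : ℝ) + 1 / 2))) ^ (2 * j + 3) := by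
  rw [div_three_mul_one_div_mul_pow]
  refine (coeff_mul_tsum_le m j hξ).trans_lt (one_div_lt_one_div_of_lt (by positivity) ?_)
  exact mul_lt_mul_of_pos_right (three_mul_pow_lt_mul_pow m hj) (by positivity)

theorem stmt11_general (mstar : ℕ) (ξ : ℝ) (hξ : 0 < ξ)
    (η : ℝ) (hη : η = 1 / (ξ * ((mstar : ℝ) + 1 / 2))) (hη1 : η < 1) :
    (∀ j : ℕ, Summable (fun k : ℕ => 1 / (((k + mstar + 1 : ℕ) : ℝ)) ^ (2 * j + 3))) ∧
    Summable (fun j : ℕ => (2 / ((2 * (j : ℝ) + 3) * ξ ^ (2 * j + 3))) *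
        ∑' k : ℕ, 1 / (((k + mstar + 1 : ℕ) : ℝ)) ^ (2 * j + 3)) ∧
    (∑' j : ℕ, (2 / ((2 * (j : ℝ) + 3) * ξ ^ (2 * j + 3))) *
        ∑' k : ℕ, 1 / (((k + mstar + 1 : ℕ) : ℝ)) ^ (2 * j + 3))
      < ((mstar : ℝ) + 1 / 2) * η ^ 3 / (3 * (1 - η ^ 2)) := by
  have hη0 : 0 < η := hη ▸ by positivity
  have hη2 : η ^ 2 < 1 := by nlinarith
  have hgeom := (hasSum_pow_two_mul_add_three hη2).mul_left (((mstar : ℝ) + 1 / 2) / 3)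
  rw [div_mul_div_comm] at hgeom
  subst hη
  have hle := coeff_mul_tsum_le_geometric mstar hξ
  have hsum := hgeom.summable.of_nonneg_of_le (fun j => by positivity) hle
  exact ⟨fun j => summable_one_div_nat_add_pow mstar (by omega), hsum,
    hasSum_lt hle (coeff_mul_tsum_lt_geometric mstar hξ one_ne_zero) hsum.hasSum hgeom⟩

/-- convergence and bound for the iterated series
`∑_{j=1}^∞ (2/((2j+1) ξ^{2j+1})) ∑_{k=m*+1}^∞ k^{−(2j+1)}`
(the index `j` below corresponds to `j+1` above, so `2j+1` becomes `2j+3`). -/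
theorem stmt11 (mstar : ℕ) (hm : 1 ≤ mstar) (ξ : ℝ) (hξ : 0 < ξ)
    (η : ℝ) (hη : η = 1 / (ξ * ((mstar : ℝ) + 1 / 2))) (hη1 : η < 1) :
    (∀ j : ℕ, Summable (fun k : ℕ => 1 / (((k + mstar + 1 : ℕ) : ℝ)) ^ (2 * j + 3))) ∧
    Summable (fun j : ℕ => (2 / ((2 * (j : ℝ) + 3) * ξ ^ (2 * j + 3))) *
        ∑' k : ℕ, 1 / (((k + mstar + 1 : ℕ) : ℝ)) ^ (2 * j + 3)) ∧
    (∑' j : ℕ, (2 / ((2 * (j : ℝ) + 3) * ξ ^ (2 * j + 3))) *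
        ∑' k : ℕ, 1 / (((k + mstar + 1 : ℕ) : ℝ)) ^ (2 * j + 3))
      < ((mstar : ℝ) + 1 / 2) * η ^ 3 / (3 * (1 - η ^ 2)) :=
  stmt11_general mstar ξ hξ η hη hη1
end

section
/- Let λ > 0 and let m* ≥ 1 be an integer with 1/m* ≤ 2λ², and let S : [1/m*, 2λ²] → ℝ be continuous. Define, for h ∈ (0,1), F(h) = ∫_{1/m*}^{2λ²} S(ξ) h^{2/ξ} / ( λ√2 · √ξ · √(1 − ξ/(2λ²)) ) dξ. Then there exist C > 0 and h₀ ∈ (0,1) such that |F(h)| ≤ C h^{1/λ²} / √(log(1/h)) for all h ∈ (0, h₀). -/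
/-!
Write `b = 2λ²`. Convexity of `ξ ↦ 1/ξ` (its tangent at `b`) gives
`h^(2/ξ) ≤ h^(1/λ²) · exp(-c (b - ξ))` with `c = 2 log(1/h) / b²`, so after bounding `S` and
`1/√ξ` by constants, and with `u = b - ξ`, the integral is at most a constant times
`h^(1/λ²) ∫₀^∞ u^(-1/2) e^(-c u) du = h^(1/λ²) √(π / c)`, which is of order
`h^(1/λ²) / √(log(1/h))`.
-/

open Real MeasureTheory Set intervalIntegral

lemma inv_add_sub_div_sq_le_inv {b ξ : ℝ} (hb : 0 < b) (hξ : 0 < ξ) :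
    b⁻¹ + (b - ξ) / b ^ 2 ≤ ξ⁻¹ := by
  have key : ξ⁻¹ - (b⁻¹ + (b - ξ) / b ^ 2) = (b - ξ) ^ 2 / (ξ * b ^ 2) := by
    field_simp; ring
  have : 0 ≤ (b - ξ) ^ 2 / (ξ * b ^ 2) := by positivity
  linarith

lemma rpow_div_le_rpow_div_mul_exp {h κ b ξ : ℝ} (h0 : 0 < h) (h1 : h ≤ 1) (hκ : 0 ≤ κ)
    (hb : 0 < b) (hξ : 0 < ξ) :
    h ^ (κ / ξ) ≤ h ^ (κ / b) * exp (-(κ * log (1 / h) / b ^ 2 * (b - ξ))) := by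
  rw [rpow_def_of_pos h0, rpow_def_of_pos h0, ← exp_add, exp_le_exp, one_div, log_inv]
  have hlog : log h ≤ 0 := log_nonpos h0.le h1
  have := mul_le_mul_of_nonpos_right
    (mul_le_mul_of_nonneg_left (inv_add_sub_div_sq_le_inv hb hξ) hκ) hlog
  calc log h * (κ / ξ) = κ * ξ⁻¹ * log h := by ring
    _ ≤ κ * (b⁻¹ + (b - ξ) / b ^ 2) * log h := this
    _ = _ := by ring

lemma integrableOn_inv_sqrt_mul_exp_neg_Ioi {c : ℝ} (hc : 0 < c) :
    IntegrableOn (fun u ↦ (√u)⁻¹ * exp (-(c * u))) (Ioi 0) := by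
  refine (integrableOn_rpow_mul_exp_neg_mul_rpow (s := -(1 / 2)) (p := 1) (by norm_num)
    one_pos hc).congr_fun (fun u hu ↦ ?_) measurableSet_Ioi
  simp only [rpow_neg (le_of_lt hu), ← sqrt_eq_rpow, rpow_one, neg_mul]

lemma integral_inv_sqrt_mul_exp_neg_le {c T : ℝ} (hc : 0 < c) (hT : 0 ≤ T) :
    ∫ u in 0..T, (√u)⁻¹ * exp (-(c * u)) ≤ √(π / c) := by
  have hint := integrableOn_inv_sqrt_mul_exp_neg_Ioi hc
  have hIoi : ∫ u in Ioi 0, (√u)⁻¹ * exp (-(c * u)) = √(π / c) := by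
    have := integral_rpow_mul_exp_neg_mul_Ioi (a := 1 / 2) one_half_pos hc
    rw [Gamma_one_half_eq, ← sqrt_eq_rpow, ← sqrt_mul (by positivity),
      one_div_mul_eq_div] at this
    rw [← this]
    refine setIntegral_congr_fun measurableSet_Ioi (fun u hu ↦ ?_)
    rw [show (1 / 2 : ℝ) - 1 = -(1 / 2) by norm_num, rpow_neg (le_of_lt hu), ← sqrt_eq_rpow]
  rw [integral_of_le hT, ← hIoi]
  refine setIntegral_mono_set hint ?_ Ioc_subset_Ioi_self.eventuallyLE
  filter_upwards with u using by positivity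

lemma abs_mul_rpow_div_sqrt_le {s M h a b ξ : ℝ} (hs : |s| ≤ M) (h0 : 0 < h) (h1 : h ≤ 1)
    (ha : 0 < a) (haξ : a ≤ ξ) (hb : 0 < b) :
    |s * h ^ (2 / ξ) / (√ξ * √(1 - ξ / b))| ≤
      M * √(b / a) * h ^ (2 / b) *
        ((√(b - ξ))⁻¹ * exp (-(2 * log (1 / h) / b ^ 2 * (b - ξ)))) := by
  have hξ : 0 < ξ := ha.trans_le haξ
  have hM : 0 ≤ M := (abs_nonneg s).trans hs
  -- inverses rather than divisions, so that `ξ = b` (where `(√0)⁻¹ = 0`) needs no case split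
  rw [show 1 - ξ / b = (b - ξ) / b by field_simp, sqrt_div' _ hb.le, sqrt_div' _ ha.le,
    abs_div, abs_of_nonneg (by positivity : 0 ≤ √ξ * (√(b - ξ) / √b)), abs_mul,
    abs_of_nonneg (rpow_nonneg h0.le _)]
  calc |s| * h ^ (2 / ξ) / (√ξ * (√(b - ξ) / √b))
      = |s| * h ^ (2 / ξ) * √b * (√ξ)⁻¹ * (√(b - ξ))⁻¹ := by field_simp
    _ ≤ M * (h ^ (2 / b) * exp (-(2 * log (1 / h) / b ^ 2 * (b - ξ)))) * √b * (√a)⁻¹ *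
          (√(b - ξ))⁻¹ := by
      gcongr
      exact rpow_div_le_rpow_div_mul_exp h0 h1 zero_le_two hb hξ
    _ = _ := by ring

lemma abs_integral_mul_rpow_div_sqrt_le {S : ℝ → ℝ} {M a b h : ℝ} (ha : 0 < a) (hab : a ≤ b)
    (hS : ∀ ξ ∈ Icc a b, |S ξ| ≤ M) (h0 : 0 < h) (h1 : h < 1) :
    |∫ ξ in a..b, S ξ * h ^ (2 / ξ) / (√ξ * √(1 - ξ / b))| ≤
      M * √(b / a) * h ^ (2 / b) * √(π * b ^ 2 / 2) / √(log (1 / h)) := by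
  have hb : 0 < b := ha.trans_le hab
  have hL : 0 < log (1 / h) := log_pos (by rwa [lt_div_iff₀ h0, one_mul])
  have hM : 0 ≤ M := (abs_nonneg _).trans (hS a ⟨le_rfl, hab⟩)
  set c := 2 * log (1 / h) / b ^ 2 with hc_def
  set K := M * √(b / a) * h ^ (2 / b)
  have hc : 0 < c := by positivity
  have hK : 0 ≤ K := by positivity
  set g : ℝ → ℝ := fun u ↦ (√u)⁻¹ * exp (-(c * u))
  have hg : IntervalIntegrable (fun ξ ↦ g (b - ξ)) volume a b := by
    have := ((intervalIntegrable_iff_integrableOn_Ioc_of_le (sub_nonneg.2 hab)).2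
      ((integrableOn_inv_sqrt_mul_exp_neg_Ioi hc).mono_set Ioc_subset_Ioi_self)).comp_sub_left b
    simpa only [sub_zero, sub_sub_cancel] using this.symm
  calc |∫ ξ in a..b, S ξ * h ^ (2 / ξ) / (√ξ * √(1 - ξ / b))|
      ≤ ∫ ξ in a..b, K * g (b - ξ) := by
        rw [← Real.norm_eq_abs]
        exact norm_integral_le_of_norm_le hab (ae_of_all _ fun ξ hξ ↦
          abs_mul_rpow_div_sqrt_le (hS ξ ⟨hξ.1.le, hξ.2⟩) h0 h1.le ha hξ.1.le hb)
          (hg.const_mul K)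
    _ = K * ∫ u in 0..b - a, g u := by
        rw [intervalIntegral.integral_const_mul, integral_comp_sub_left g, sub_self]
    _ ≤ K * √(π / c) :=
        mul_le_mul_of_nonneg_left (integral_inv_sqrt_mul_exp_neg_le hc (sub_nonneg.2 hab)) hK
    _ = K * √(π * b ^ 2 / 2) / √(log (1 / h)) := by
        rw [show π / c = π * b ^ 2 / 2 / log (1 / h) by rw [hc_def]; field_simp,
          sqrt_div' _ hL.le, ← mul_div_assoc]

/-- the regime-IV integral
`F(h) = ∫_{1/m*}^{2λ²} S(ξ) h^{2/ξ} / (λ√2 √ξ √(1−ξ/(2λ²))) dξ`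
satisfies `|F(h)| ≤ C h^{1/λ²} / √(log(1/h))` for small `h`. -/
theorem stmt13 (lam : ℝ) (hlam : 0 < lam) (mstar : ℕ) (hm : 1 ≤ mstar)
    (hm2 : 1 / (mstar : ℝ) ≤ 2 * lam ^ 2) (S : ℝ → ℝ)
    (hS : ContinuousOn S (Set.Icc (1 / (mstar : ℝ)) (2 * lam ^ 2))) :
    ∃ C > (0 : ℝ), ∃ h₀ ∈ Set.Ioo (0 : ℝ) 1, ∀ h : ℝ, 0 < h → h < h₀ →
      |∫ ξ in (1 / (mstar : ℝ))..(2 * lam ^ 2),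
          S ξ * h ^ (2 / ξ) /
            (lam * Real.sqrt 2 * Real.sqrt ξ * Real.sqrt (1 - ξ / (2 * lam ^ 2)))|
        ≤ C * h ^ (1 / lam ^ 2) / Real.sqrt (Real.log (1 / h)) := by
  set a := 1 / (mstar : ℝ)
  set b := 2 * lam ^ 2
  have ha : 0 < a := one_div_pos.2 (Nat.cast_pos.2 hm)
  obtain ⟨M, hM⟩ := isCompact_Icc.exists_bound_of_continuousOn hS
  have hM' : ∀ ξ ∈ Icc a b, |S ξ| ≤ max M 1 :=
    fun ξ hξ ↦ (hM ξ hξ).trans (le_max_left _ _)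
  refine ⟨max M 1 * √(b / a) * √(π * b ^ 2 / 2) / (lam * √2), by positivity, 1 / 2,
    ⟨by norm_num, by norm_num⟩, fun h h0 hh ↦ ?_⟩
  have hfactor : ∀ ξ, S ξ * h ^ (2 / ξ) / (lam * √2 * √ξ * √(1 - ξ / b)) =
      S ξ * h ^ (2 / ξ) / (√ξ * √(1 - ξ / b)) / (lam * √2) := fun ξ ↦ by ring
  have hexp : 1 / lam ^ 2 = 2 / b := by rw [div_mul_cancel_left₀ two_ne_zero, one_div]
  simp_rw [hfactor, intervalIntegral.integral_div, abs_div,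
    abs_of_pos (by positivity : 0 < lam * √2), hexp]
  calc _ ≤ max M 1 * √(b / a) * h ^ (2 / b) * √(π * b ^ 2 / 2) / √(log (1 / h))
          / (lam * √2) := by
        gcongr
        exact abs_integral_mul_rpow_div_sqrt_le ha hm2 hM' h0 (by linarith)
    _ = _ := by ring
end

section
/- Let λ > 0, B ∈ (0,1), and let f : [0, √B] → ℝ be continuous. For h ∈ (0,1) set A(h) = 1/(1 + √(log(1/h))). Then lim_{h → 0⁺} √(log(1/h)) · ∫_0^{√{A(h)}} f(z) · h^{ (1/λ²) z²/(1−z²) } dz = λ f(0) √π / 2. -/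
/-!
With `t = √(log (1/h)) / λ` we have `h ^ (z² / (λ² (1 - z²))) = exp (-(t z)² / (1 - z²))`,
and the substitution `z = η / t` turns `√(log (1/h)) ∫₀^{√A(h)}` into `λ ∫₀^{t √A(h)}` of
`f (η / t) exp (-η² / (1 - (η / t)²))`. Since `√A(h) ≤ √B < 1` eventually, this kernel is
dominated by `exp (-η²)` and tends to it pointwise, while `t √A(h) → ∞`; dominated
convergence yields `λ f(0) ∫₀^∞ exp (-η²) dη = λ f(0) √π / 2`.
-/

open Filter Topology MeasureTheory Set

theorem tendsto_sqrt_log_one_div_nhdsGT_zero :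
    Tendsto (fun h : ℝ => √(Real.log (1 / h))) (𝓝[>] 0) atTop := by
  refine Real.tendsto_sqrt_atTop.comp ?_
  simpa only [one_div, Real.log_inv, Function.comp_def] using
    tendsto_neg_atBot_atTop.comp Real.tendsto_log_nhdsGT_zero

theorem tendsto_mul_sqrt_one_div_one_add_atTop :
    Tendsto (fun x : ℝ => x * √(1 / (1 + x))) atTop atTop := by
  have hlow : Tendsto (fun x : ℝ => √(1 + x) - 1) atTop atTop :=
    tendsto_atTop_add_const_right _ _
      (Real.tendsto_sqrt_atTop.comp (tendsto_atTop_add_const_left _ 1 tendsto_id))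
  refine tendsto_atTop_mono' _ ?_ hlow
  filter_upwards [eventually_ge_atTop 0] with x hx
  have hs : 0 < √(1 + x) := Real.sqrt_pos.2 (by linarith)
  have hsq : √(1 + x) ^ 2 = 1 + x := Real.sq_sqrt (by linarith)
  have hone : 1 ≤ √(1 + x) := Real.one_le_sqrt.2 (by linarith)
  rw [Real.sqrt_div' _ (by linarith), Real.sqrt_one, mul_one_div, le_div_iff₀ hs]
  nlinarith

theorem rpow_eq_exp_neg_sqrt_log_one_div_sq {h : ℝ} (h0 : 0 < h) (h1 : h ≤ 1) (x : ℝ) :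
    h ^ x = Real.exp (-√(Real.log (1 / h)) ^ 2 * x) := by
  rw [Real.rpow_def_of_pos h0, Real.sq_sqrt (Real.log_nonneg (one_le_one_div h0 h1)), one_div,
    Real.log_inv, neg_neg]

theorem div_mem_Icc_of_mem_Ioc_mul {b s d η : ℝ} (hs : 0 < s) (hd : d ≤ b)
    (hη : η ∈ Ioc 0 (s * d)) : η / s ∈ Icc 0 b :=
  ⟨by positivity [hη.1.le], (div_le_iff₀' hs).2 (hη.2.trans (by gcongr))⟩

theorem exp_neg_sq_div_one_sub_sq_le (η : ℝ) {x : ℝ} (hx : x ^ 2 < 1) :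
    Real.exp (-η ^ 2 / (1 - x ^ 2)) ≤ Real.exp (-η ^ 2) := by
  rw [Real.exp_le_exp, neg_div, neg_le_neg_iff]
  exact le_div_self (sq_nonneg η) (by linarith) (by nlinarith)

section LaplaceKernel

variable {ι : Type*} {l : Filter ι} {b : ℝ} {f : ℝ → ℝ} {t c : ι → ℝ}

theorem tendsto_indicator_Ioc_mul_exp (hb : 0 ≤ b) (hf : ContinuousOn f (Icc 0 b))
    (ht : Tendsto t l atTop) (hc : ∀ᶠ i in l, c i ≤ b)
    (htc : Tendsto (fun i => t i * c i) l atTop) (η : ℝ) :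
    Tendsto (fun i => (Ioc 0 (t i * c i)).indicator
        (fun η => f (η / t i) * Real.exp (-η ^ 2 / (1 - (η / t i) ^ 2))) η)
      l (𝓝 ((Ioi 0).indicator (fun η => f 0 * Real.exp (-η ^ 2)) η)) := by
  rcases le_or_gt η 0 with hη | hη
  · simp only [indicator_of_notMem (fun h : η ∈ Ioc _ _ => hη.not_gt h.1),
      indicator_of_notMem (fun h : η ∈ Ioi 0 => hη.not_gt h)]
    exact tendsto_const_nhds
  have hin : ∀ᶠ i in l, η ∈ Ioc 0 (t i * c i) :=
    (htc.eventually_ge_atTop η).mono fun i hle => ⟨hη, hle⟩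
  have hx : Tendsto (fun i => η / t i) l (𝓝[Icc 0 b] 0) := by
    refine tendsto_nhdsWithin_iff.2 ⟨tendsto_const_nhds.div_atTop ht, ?_⟩
    filter_upwards [ht.eventually_gt_atTop 0, hc, hin] with i hti hci hηi
    exact div_mem_Icc_of_mem_Ioc_mul hti hci hηi
  have hcont : ContinuousWithinAt (fun x => f x * Real.exp (-η ^ 2 / (1 - x ^ 2))) (Icc 0 b) 0 :=
    (hf 0 ⟨le_rfl, hb⟩).mul (by fun_prop (disch := norm_num))
  rw [indicator_of_mem (mem_Ioi.2 hη)]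
  refine Tendsto.congr' ?_ (by simpa [Function.comp_def] using hcont.tendsto.comp hx)
  filter_upwards [hin] with i hηi
  rw [indicator_of_mem hηi]

theorem tendsto_integral_comp_div_mul_exp [l.IsCountablyGenerated] (hb : 0 ≤ b) (hb1 : b < 1)
    (hf : ContinuousOn f (Icc 0 b)) (ht : Tendsto t l atTop) (hc : ∀ᶠ i in l, c i ≤ b)
    (htc : Tendsto (fun i => t i * c i) l atTop) :
    Tendsto (fun i => ∫ η in 0..t i * c i,
        f (η / t i) * Real.exp (-η ^ 2 / (1 - (η / t i) ^ 2)))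
      l (𝓝 (f 0 * (√Real.pi / 2))) := by
  obtain ⟨M, hM⟩ := isCompact_Icc.exists_bound_of_continuousOn hf
  have hgood : ∀ᶠ i in l, 0 < t i ∧ c i ≤ b ∧ 0 ≤ t i * c i :=
    (ht.eventually_gt_atTop 0).and (hc.and (htc.eventually_ge_atTop 0))
  have hsq : ∀ {x : ℝ}, x ∈ Icc 0 b → x ^ 2 < 1 := fun hx => by nlinarith [hx.1, hx.2]
  have hlim : ∫ η, (Ioi 0).indicator (fun η => f 0 * Real.exp (-η ^ 2)) η
      = f 0 * (√Real.pi / 2) := by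
    rw [integral_indicator measurableSet_Ioi, integral_const_mul]
    simpa using congrArg (f 0 * ·) (integral_gaussian_Ioi 1)
  rw [← hlim]
  refine Tendsto.congr' ?_ (tendsto_integral_filter_of_dominated_convergence
    (fun η => M * Real.exp (-1 * η ^ 2)) ?_ ?_ ((integrable_exp_neg_mul_sq one_pos).const_mul M)
    (ae_of_all _ (tendsto_indicator_Ioc_mul_exp hb hf ht hc htc)))
  · filter_upwards [hgood] with i hi
    rw [intervalIntegral.integral_of_le hi.2.2, integral_indicator measurableSet_Ioc]
  · filter_upwards [hgood] with i ⟨hti, hci, _⟩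
    refine (aestronglyMeasurable_indicator_iff measurableSet_Ioc).2
      (ContinuousOn.aestronglyMeasurable ?_ measurableSet_Ioc)
    have hmem := fun η (hη : η ∈ Ioc 0 (t i * c i)) => div_mem_Icc_of_mem_Ioc_mul hti hci hη
    refine (hf.comp (continuousOn_id.div_const _) hmem).mul ?_
    refine Real.continuous_exp.comp_continuousOn (ContinuousOn.div (by fun_prop) (by fun_prop) ?_)
    exact fun η hη => (sub_pos.2 (hsq (hmem η hη))).ne'
  · filter_upwards [hgood] with i ⟨hti, hci, _⟩
    refine ae_of_all _ fun η => ?_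
    have hM0 : 0 ≤ M := (norm_nonneg _).trans (hM 0 ⟨le_rfl, hb⟩)
    by_cases hη : η ∈ Ioc 0 (t i * c i)
    · have hx := div_mem_Icc_of_mem_Ioc_mul hti hci hη
      rw [indicator_of_mem hη, norm_mul, Real.norm_of_nonneg (Real.exp_pos _).le, neg_one_mul]
      exact mul_le_mul (hM _ hx) (exp_neg_sq_div_one_sub_sq_le η (hsq hx)) (Real.exp_pos _).le hM0
    · rw [indicator_of_notMem hη, norm_zero]
      positivity

theorem tendsto_mul_integral_mul_exp_neg_mul_sq_div [l.IsCountablyGenerated] (hb : 0 ≤ b)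
    (hb1 : b < 1) (hf : ContinuousOn f (Icc 0 b)) (ht : Tendsto t l atTop)
    (hc : ∀ᶠ i in l, c i ≤ b) (htc : Tendsto (fun i => t i * c i) l atTop) :
    Tendsto (fun i => t i * ∫ z in 0..c i, f z * Real.exp (-(t i * z) ^ 2 / (1 - z ^ 2)))
      l (𝓝 (f 0 * (√Real.pi / 2))) := by
  refine (tendsto_integral_comp_div_mul_exp hb hb1 hf ht hc htc).congr' ?_
  filter_upwards [ht.eventually_gt_atTop 0] with i hti
  have hsubst := intervalIntegral.integral_comp_div (a := 0) (b := t i * c i)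
    (fun z => f z * Real.exp (-(t i * z) ^ 2 / (1 - z ^ 2))) hti.ne'
  rw [zero_div, mul_div_cancel_left₀ _ hti.ne', smul_eq_mul] at hsubst
  rw [← hsubst]
  simp only [mul_div_cancel₀ _ hti.ne']

end LaplaceKernel

/-- Laplace-type limit for the dominant part of the regime-IV
integral: with `A(h) = 1/(1 + √(log(1/h)))`,
`√(log(1/h)) ∫_0^{√A(h)} f(z) h^{(1/λ²) z²/(1−z²)} dz → λ f(0) √π / 2` as `h → 0⁺`. -/
theorem stmt14 (lam B : ℝ) (hlam : 0 < lam) (hB : 0 < B) (hB1 : B < 1)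
    (f : ℝ → ℝ) (hf : ContinuousOn f (Set.Icc 0 (Real.sqrt B))) :
    Tendsto (fun h : ℝ =>
        Real.sqrt (Real.log (1 / h)) *
          ∫ z in (0 : ℝ)..Real.sqrt (1 / (1 + Real.sqrt (Real.log (1 / h)))),
            f z * h ^ ((1 / lam ^ 2) * z ^ 2 / (1 - z ^ 2)))
      (nhdsWithin 0 (Set.Ioi 0))
      (nhds (lam * f 0 * Real.sqrt Real.pi / 2)) := by
  have hL := tendsto_sqrt_log_one_div_nhdsGT_zero
  have hc : Tendsto (fun h : ℝ => √(1 / (1 + √(Real.log (1 / h))))) (𝓝[>] 0) (𝓝 0) := by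
    simpa using (tendsto_const_nhds (x := (1 : ℝ)).div_atTop
      (tendsto_atTop_add_const_left _ 1 hL)).sqrt
  have hlaplace := tendsto_mul_integral_mul_exp_neg_mul_sq_div (Real.sqrt_nonneg B)
    (by simpa using Real.sqrt_lt_sqrt hB.le hB1) hf (hL.atTop_div_const hlam)
    (hc.eventually (ge_mem_nhds (Real.sqrt_pos.2 hB)))
    (by simpa only [div_mul_eq_mul_div, Function.comp_def] using
      (tendsto_mul_sqrt_one_div_one_add_atTop.comp hL).atTop_div_const hlam)
  rw [show lam * f 0 * √Real.pi / 2 = lam * (f 0 * (√Real.pi / 2)) by ring]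
  refine (hlaplace.const_mul lam).congr' ?_
  filter_upwards [Ioo_mem_nhdsGT one_pos] with h hh
  rw [← mul_assoc, mul_div_cancel₀ _ hlam.ne']
  refine congrArg _ (intervalIntegral.integral_congr fun z _ => ?_)
  rw [rpow_eq_exp_neg_sqrt_log_one_div_sq hh.1 hh.2.le]
  field_simp
end
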